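/- Deterministic stochastic-approximation contraction: suppose Δ_{t+1} = (1−α_t)Δ_t + α_t F_t in ℝ, with 0 ≤ α_t ≤ 1, Σ_t α_t = ∞, |F_t| ≤ γ|Δ_t| + c_t where 0 ≤ γ < 1 and c_t → 0, and suppose additionally that the Δ_t are uniformly bounded. Then Δ_t → 0. -/

import Mathlib

/-!
Writing `x_t = |Δ_t|`, the recursion gives `x_{t+1} ≤ (1 - α_t) x_t + α_t (γ D + c_t)` as long as
`x_t ≤ D`. For a relaxation `x_{t+1} ≤ (1 - α_t) x_t + α_t M`, the excess `x_t - M` is damped by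
`∏ (1 - α_t) ≤ exp (-∑ α_t) → 0`, so an eventual bound `D` improves to `γ D + ε`. Starting from the
uniform bound `B` and iterating, `|Δ_t|` is eventually below `γ ^ n B + ε` for every `n`.
-/

open Filter Finset Topology

theorem prod_one_sub_le_exp_neg_sum {ι : Type*} (s : Finset ι) {a : ι → ℝ}
    (ha : ∀ i ∈ s, a i ≤ 1) :
    ∏ i ∈ s, (1 - a i) ≤ Real.exp (-∑ i ∈ s, a i) := by
  rw [← sum_neg_distrib, Real.exp_sum]
  exact prod_le_prod (fun i hi => by linarith [ha i hi])
    fun i _ => by linarith [Real.add_one_le_exp (-a i)]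

theorem tendsto_prod_Ico_one_sub_zero {α : ℕ → ℝ} (hα1 : ∀ t, α t ≤ 1)
    (hαdiv : Tendsto (fun T => ∑ t ∈ range T, α t) atTop atTop) (N : ℕ) :
    Tendsto (fun T => ∏ t ∈ Ico N T, (1 - α t)) atTop (𝓝 0) := by
  have hsum : Tendsto (fun T => ∑ t ∈ Ico N T, α t) atTop atTop := by
    refine (tendsto_atTop_add_const_right _ (-∑ t ∈ range N, α t) hαdiv).congr' ?_
    filter_upwards [eventually_ge_atTop N] with T hT
    rw [sum_Ico_eq_sub _ hT, sub_eq_add_neg]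
  have hexp := Real.tendsto_exp_atBot.comp (tendsto_neg_atTop_atBot.comp hsum)
  exact tendsto_of_tendsto_of_tendsto_of_le_of_le tendsto_const_nhds hexp
    (fun T => prod_nonneg fun t _ => sub_nonneg.2 (hα1 t))
    (fun T => prod_one_sub_le_exp_neg_sum _ fun t _ => hα1 t)

theorem le_prod_Ico_one_sub_mul_max {y α : ℕ → ℝ} {N : ℕ} (hα1 : ∀ t, α t ≤ 1)
    (hy : ∀ t ≥ N, y (t + 1) ≤ (1 - α t) * y t) :
    ∀ T ≥ N, y T ≤ (∏ t ∈ Ico N T, (1 - α t)) * max (y N) 0 := by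
  intro T hT
  induction T, hT using Nat.le_induction with
  | base => simp
  | succ T hNT ih =>
    rw [prod_Ico_succ_top hNT, mul_comm _ (1 - α T), mul_assoc]
    exact (hy T hNT).trans (mul_le_mul_of_nonneg_left ih (sub_nonneg.2 (hα1 T)))

theorem eventually_le_add_of_relaxation {x α : ℕ → ℝ} {M ε : ℝ} (hα1 : ∀ t, α t ≤ 1)
    (hαdiv : Tendsto (fun T => ∑ t ∈ range T, α t) atTop atTop)
    (hx : ∀ᶠ t in atTop, x (t + 1) ≤ (1 - α t) * x t + α t * M) (hε : 0 < ε) :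
    ∀ᶠ t in atTop, x t ≤ M + ε := by
  obtain ⟨N, hN⟩ := eventually_atTop.1 hx
  have hdamp := le_prod_Ico_one_sub_mul_max (y := fun t => x t - M) hα1
    fun t ht => by linarith [hN t ht]
  have hlim : Tendsto (fun T => (∏ t ∈ Ico N T, (1 - α t)) * max (x N - M) 0) atTop (𝓝 0) := by
    simpa using (tendsto_prod_Ico_one_sub_zero hα1 hαdiv N).mul_const (max (x N - M) 0)
  filter_upwards [eventually_ge_atTop N, hlim.eventually (gt_mem_nhds hε)] with T hNT hT
  linarith [hdamp T hNT]

theorem eventually_abs_le_mul_add (Δ F α c : ℕ → ℝ) {γ D ε : ℝ}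
    (hrec : ∀ t, Δ (t + 1) = (1 - α t) * Δ t + α t * F t)
    (hα0 : ∀ t, 0 ≤ α t) (hα1 : ∀ t, α t ≤ 1)
    (hαdiv : Tendsto (fun T => ∑ t ∈ range T, α t) atTop atTop)
    (hγ0 : 0 ≤ γ) (hF : ∀ t, |F t| ≤ γ * |Δ t| + c t) (hc : Tendsto c atTop (𝓝 0))
    (hD : ∀ᶠ t in atTop, |Δ t| ≤ D) (hε : 0 < ε) :
    ∀ᶠ t in atTop, |Δ t| ≤ γ * D + ε := by
  have hrelax : ∀ᶠ t in atTop, |Δ (t + 1)| ≤ (1 - α t) * |Δ t| + α t * (γ * D + ε / 2) := by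
    filter_upwards [hD, hc.eventually (gt_mem_nhds (half_pos hε))] with t hDt hct
    have hFt : |F t| ≤ γ * D + ε / 2 := by
      linarith [hF t, mul_le_mul_of_nonneg_left hDt hγ0]
    calc |Δ (t + 1)| ≤ |(1 - α t) * Δ t| + |α t * F t| := hrec t ▸ abs_add_le _ _
      _ = (1 - α t) * |Δ t| + α t * |F t| := by
        rw [abs_mul, abs_mul, abs_of_nonneg (sub_nonneg.2 (hα1 t)), abs_of_nonneg (hα0 t)]
      _ ≤ (1 - α t) * |Δ t| + α t * (γ * D + ε / 2) := by gcongr; exact hα0 t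
  simpa [add_assoc] using
    eventually_le_add_of_relaxation (x := fun t => |Δ t|) hα1 hαdiv hrelax (half_pos hε)

theorem eventually_abs_le_pow_mul_add (Δ F α c : ℕ → ℝ) {γ B : ℝ}
    (hrec : ∀ t, Δ (t + 1) = (1 - α t) * Δ t + α t * F t)
    (hα0 : ∀ t, 0 ≤ α t) (hα1 : ∀ t, α t ≤ 1)
    (hαdiv : Tendsto (fun T => ∑ t ∈ range T, α t) atTop atTop)
    (hγ0 : 0 ≤ γ) (hγ1 : γ ≤ 1) (hF : ∀ t, |F t| ≤ γ * |Δ t| + c t)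
    (hc : Tendsto c atTop (𝓝 0)) (hB : ∀ t, |Δ t| ≤ B) (n : ℕ) :
    ∀ ε > 0, ∀ᶠ t in atTop, |Δ t| ≤ γ ^ n * B + ε := by
  induction n with
  | zero => exact fun ε hε => Eventually.of_forall fun t => by rw [pow_zero, one_mul]; linarith [hB t]
  | succ n ih =>
    intro ε hε
    filter_upwards [eventually_abs_le_mul_add Δ F α c hrec hα0 hα1 hαdiv hγ0 hF hc
      (ih (ε / 2) (half_pos hε)) (half_pos hε)] with t ht
    calc |Δ t| ≤ γ ^ (n + 1) * B + γ * (ε / 2) + ε / 2 := by rw [pow_succ']; linarith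
      _ ≤ γ ^ (n + 1) * B + ε := by linarith [mul_le_of_le_one_left (half_pos hε).le hγ1]

/-- Deterministic stochastic-approximation contraction: if
`Δ_{t+1} = (1-α_t)Δ_t + α_t F_t` with `α_t ∈ [0,1]`, `Σ α_t = ∞`,
`|F_t| ≤ γ|Δ_t| + c_t` with `γ ∈ [0,1)` and `c_t → 0`, and the `Δ_t` are uniformly
bounded, then `Δ_t → 0`. -/
theorem deterministic_sa_contraction
    (Δ F α c : ℕ → ℝ) (γ : ℝ)
    (hrec : ∀ t, Δ (t + 1) = (1 - α t) * Δ t + α t * F t)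
    (hα0 : ∀ t, 0 ≤ α t) (hα1 : ∀ t, α t ≤ 1)
    (hαdiv : Tendsto (fun T => ∑ t ∈ Finset.range T, α t) atTop atTop)
    (hγ0 : 0 ≤ γ) (hγ1 : γ < 1)
    (hF : ∀ t, |F t| ≤ γ * |Δ t| + c t)
    (hc : Tendsto c atTop (nhds 0))
    (hbound : ∃ B, ∀ t, |Δ t| ≤ B) :
    Tendsto Δ atTop (nhds 0) := by
  obtain ⟨B, hB⟩ := hbound
  rw [Metric.tendsto_nhds]
  intro ε hε
  have hpow : Tendsto (fun n => γ ^ n * B) atTop (𝓝 0) := by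
    simpa using (tendsto_pow_atTop_nhds_zero_of_lt_one hγ0 hγ1).mul_const B
  obtain ⟨n, hn⟩ := (hpow.eventually (gt_mem_nhds (half_pos hε))).exists
  filter_upwards [eventually_abs_le_pow_mul_add Δ F α c hrec hα0 hα1 hαdiv hγ0 hγ1.le hF hc hB n
    (ε / 2) (half_pos hε)] with t ht
  rw [Real.dist_eq, sub_zero]
  linarith
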